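/- Let av(n) = av_{t73}(n) where t73 = N(N(N(L,L,L),L,L),L,L). Then av(0) = 0, av(1) = 1, av(2) = 0, and for all n ≥ 3, av(n) = Σ_{k=1}^{n-2} av(k)·av(n-k-1) + Σ_{ℓ=1}^{n-4} Σ_{m=1}^{n-ℓ-3} Σ_{k=1}^{n-ℓ-m-2} av(ℓ)·av(m)·av(k)·av(n-ℓ-m-k-1). -/

import Mathlib

inductive TTree : Type
  | L : TTree
  | N : TTree → TTree → TTree → TTree

namespace TTree

/-- `occursAtRoot t T` : the pattern `t` occurs at the root of `T`. -/
def occursAtRoot : TTree → TTree → Prop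
  | .L, _ => True
  | .N _ _ _, .L => False
  | .N p q r, .N a b c => occursAtRoot p a ∧ occursAtRoot q b ∧ occursAtRoot r c

/-- `contains t T` : the pattern `t` occurs at some vertex of `T`. -/
def contains (t : TTree) : TTree → Prop
  | .L => occursAtRoot t .L
  | .N a b c => occursAtRoot t (.N a b c) ∨ contains t a ∨ contains t b ∨ contains t c

/-- `T.avoids t` : the tree `T` avoids the pattern `t`. -/
def avoids (T t : TTree) : Prop := ¬ contains t T

/-- the number of leaves of a ternary tree -/
def leaves : TTree → ℕ
  | .L => 1
  | .N a b c => leaves a + leaves b + leaves c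

end TTree

/-- `av t n` : the number of `n`-leaf ternary trees avoiding the pattern `t` -/
noncomputable def av (t : TTree) (n : ℕ) : ℕ :=
  Set.ncard {T : TTree | T.leaves = n ∧ T.avoids t}

/-- the 7-leaf pattern `t73 = N(N(N(L,L,L),L,L),L,L)` -/
def t73 : TTree := .N (.N (.N .L .L .L) .L .L) .L .L

/-!
The pattern `t73` occurs at the root of `N a b c` exactly when `a` has an internal left child.
Hence a `t73`-avoiding tree with more than one leaf is either `N L b c` or `N (N L x y) b c`
with `x, y, b, c` avoiding `t73`, and sorting these trees by the leaf numbers of their subtrees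
gives the two sums.
-/

deriving instance DecidableEq for TTree

open Finset

section Graded

variable {ι α β : Type*} [DecidableEq α] [DecidableEq β] {w : α → ι} {A : ι → Finset α}

theorem mem_biUnion_product_iff (hA : ∀ i, ∀ x ∈ A i, w x = i) {s : Finset ι}
    {B : ι → Finset β} {p : α × β} :
    p ∈ s.biUnion (fun i => A i ×ˢ B i) ↔ w p.1 ∈ s ∧ p.1 ∈ A (w p.1) ∧ p.2 ∈ B (w p.1) := by
  simp only [mem_biUnion, mem_product]
  constructor
  · rintro ⟨i, hi, h₁, h₂⟩
    obtain rfl := hA i p.1 h₁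
    exact ⟨hi, h₁, h₂⟩
  · exact fun h => ⟨w p.1, h⟩

theorem card_biUnion_product (hA : ∀ i, ∀ x ∈ A i, w x = i) (s : Finset ι) (B : ι → Finset β) :
    #(s.biUnion fun i => A i ×ˢ B i) = ∑ i ∈ s, #(A i) * #(B i) := by
  rw [card_biUnion]
  · simp only [card_product]
  · intro i _ j _ hij
    refine disjoint_left.2 fun p hi hj => hij ?_
    rw [← hA i p.1 (mem_product.1 hi).1, ← hA j p.1 (mem_product.1 hj).1]

end Graded

namespace TTree

theorem one_le_leaves : ∀ T : TTree, 1 ≤ T.leaves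
  | .L => le_rfl
  | .N a _ _ => by
    have := one_le_leaves a
    simp only [leaves]
    omega

theorem leaves_eq_one_iff {T : TTree} : T.leaves = 1 ↔ T = L := by
  cases T with
  | L => simp [leaves]
  | N a b c =>
    have := one_le_leaves b
    have := one_le_leaves c
    simp only [leaves, reduceCtorEq, iff_false]
    omega

theorem finite_setOf_leaves_le (n : ℕ) : {T : TTree | T.leaves ≤ n}.Finite := by
  induction n with
  | zero =>
    refine Set.finite_empty.subset fun T (h : T.leaves ≤ 0) => ?_
    exact absurd (one_le_leaves T) (by omega)
  | succ n ih =>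
    refine (((ih.prod (ih.prod ih)).image fun p => N p.1 p.2.1 p.2.2).insert L).subset ?_
    rintro (_ | ⟨a, b, c⟩) h
    · exact Set.mem_insert _ _
    · have := one_le_leaves a
      have := one_le_leaves b
      have := one_le_leaves c
      replace h : a.leaves + b.leaves + c.leaves ≤ n + 1 := h
      refine Set.mem_insert_of_mem _ ⟨(a, b, c), ⟨?_, ?_, ?_⟩, rfl⟩ <;>
        simp only [Set.mem_ofPred_eq] <;> omega

theorem avoids_leaf_node (p q r : TTree) : L.avoids (N p q r) := by
  simp [avoids, contains, occursAtRoot]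

theorem avoids_node_iff {t a b c : TTree} :
    (N a b c).avoids t ↔ ¬ occursAtRoot t (N a b c) ∧ a.avoids t ∧ b.avoids t ∧ c.avoids t := by
  simp only [avoids, contains, not_or]

noncomputable def avoiders (t : TTree) (n : ℕ) : Finset TTree :=
  ((finite_setOf_leaves_le n).subset fun _ h => le_of_eq h.1 :
    {T : TTree | T.leaves = n ∧ T.avoids t}.Finite).toFinset

variable {t : TTree}

theorem mem_avoiders {n : ℕ} {T : TTree} : T ∈ avoiders t n ↔ T.leaves = n ∧ T.avoids t :=
  Set.Finite.mem_toFinset _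

theorem leaves_of_mem_avoiders {n : ℕ} {T : TTree} (h : T ∈ avoiders t n) : T.leaves = n :=
  (mem_avoiders.1 h).1

noncomputable def avoidingPairs (t : TTree) (n : ℕ) : Finset (TTree × TTree) :=
  (Icc 1 (n - 2)).biUnion fun k => avoiders t k ×ˢ avoiders t (n - k - 1)

noncomputable def avoidingQuadruples (t : TTree) (n : ℕ) : Finset (TTree × TTree × TTree × TTree) :=
  (Icc 1 (n - 4)).biUnion fun l => avoiders t l ×ˢ
    (Icc 1 (n - l - 3)).biUnion fun m => avoiders t m ×ˢ
      (Icc 1 (n - l - m - 2)).biUnion fun k => avoiders t k ×ˢ avoiders t (n - l - m - k - 1)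

theorem mem_avoidingPairs {n : ℕ} {b c : TTree} :
    (b, c) ∈ avoidingPairs t n ↔ 1 + b.leaves + c.leaves = n ∧ b.avoids t ∧ c.avoids t := by
  have := one_le_leaves b
  have := one_le_leaves c
  simp only [avoidingPairs, mem_biUnion_product_iff (fun _ _ => leaves_of_mem_avoiders),
    mem_Icc, mem_avoiders, true_and]
  grind

theorem mem_avoidingQuadruples {n : ℕ} {x y b c : TTree} :
    (x, y, b, c) ∈ avoidingQuadruples t n ↔ 1 + x.leaves + y.leaves + b.leaves + c.leaves = n ∧
      x.avoids t ∧ y.avoids t ∧ b.avoids t ∧ c.avoids t := by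
  have := one_le_leaves x
  have := one_le_leaves y
  have := one_le_leaves b
  have := one_le_leaves c
  simp only [avoidingQuadruples, mem_biUnion_product_iff (fun _ _ => leaves_of_mem_avoiders),
    mem_Icc, mem_avoiders, true_and]
  grind

theorem card_avoidingPairs (n : ℕ) :
    #(avoidingPairs t n) = ∑ k ∈ Icc 1 (n - 2), #(avoiders t k) * #(avoiders t (n - k - 1)) :=
  card_biUnion_product (fun _ _ => leaves_of_mem_avoiders) _ _

theorem card_avoidingQuadruples (n : ℕ) :
    #(avoidingQuadruples t n) =
      ∑ l ∈ Icc 1 (n - 4), ∑ m ∈ Icc 1 (n - l - 3), ∑ k ∈ Icc 1 (n - l - m - 2),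
        #(avoiders t l) * #(avoiders t m) * #(avoiders t k) *
          #(avoiders t (n - l - m - k - 1)) := by
  simp only [avoidingQuadruples, card_biUnion_product (fun _ _ => leaves_of_mem_avoiders),
    mul_sum, mul_assoc]

end TTree

open TTree

theorem av_eq_card_avoiders (t : TTree) (n : ℕ) : av t n = #(avoiders t n) :=
  Set.ncard_eq_toFinset_card _ _

theorem avoids_t73_node_leaf {b c : TTree} :
    (N L b c).avoids t73 ↔ b.avoids t73 ∧ c.avoids t73 := by
  have : ¬ occursAtRoot t73 (N L b c) := by simp [t73, occursAtRoot]
  have leaf_avoids : L.avoids t73 := avoids_leaf_node _ _ _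
  simp [avoids_node_iff, this, leaf_avoids]

theorem avoids_t73_node_node_leaf {x y b c : TTree} :
    (N (N L x y) b c).avoids t73 ↔
      x.avoids t73 ∧ y.avoids t73 ∧ b.avoids t73 ∧ c.avoids t73 := by
  have : ¬ occursAtRoot t73 (N (N L x y) b c) := by simp [t73, occursAtRoot]
  rw [avoids_node_iff, avoids_t73_node_leaf]
  simp only [this, not_false_eq_true, true_and, and_assoc]

theorem not_avoids_t73_node_node_node {u v w x y b c : TTree} :
    ¬ (N (N (N u v w) x y) b c).avoids t73 := by
  simp [avoids_node_iff, t73, occursAtRoot]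

theorem avoiders_t73_eq {n : ℕ} (hn : n ≠ 1) :
    avoiders t73 n = (avoidingPairs t73 n).image (fun p => N L p.1 p.2) ∪
      (avoidingQuadruples t73 n).image (fun q => N (N L q.1 q.2.1) q.2.2.1 q.2.2.2) := by
  ext T
  rcases T with _ | ⟨_ | ⟨_ | ⟨u, v, w⟩, x, y⟩, b, c⟩ <;>
    simp [mem_avoiders, mem_avoidingPairs, mem_avoidingQuadruples, avoids_t73_node_leaf,
      avoids_t73_node_node_leaf, not_avoids_t73_node_node_node, leaves]
  exact fun h => absurd h.symm hn

theorem card_avoiders_t73 {n : ℕ} (hn : n ≠ 1) :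
    #(avoiders t73 n) = #(avoidingPairs t73 n) + #(avoidingQuadruples t73 n) := by
  rw [avoiders_t73_eq hn, card_union_of_disjoint, card_image_of_injective,
    card_image_of_injective]
  · intro q q' h
    simpa [Prod.ext_iff, and_assoc] using h
  · intro p p' h
    simpa [Prod.ext_iff] using h
  · simp only [disjoint_left, mem_image]
    rintro _ ⟨p, -, rfl⟩ ⟨q, -, h⟩
    simp at h

theorem av_t73_of_ne_one {n : ℕ} (hn : n ≠ 1) :
    av t73 n =
      (∑ k ∈ Icc 1 (n - 2), av t73 k * av t73 (n - k - 1)) +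
        ∑ l ∈ Icc 1 (n - 4), ∑ m ∈ Icc 1 (n - l - 3), ∑ k ∈ Icc 1 (n - l - m - 2),
          av t73 l * av t73 m * av t73 k * av t73 (n - l - m - k - 1) := by
  simp only [av_eq_card_avoiders, card_avoiders_t73 hn, card_avoidingPairs,
    card_avoidingQuadruples]

theorem av_t73_one : av t73 1 = 1 := by
  have : {T : TTree | T.leaves = 1 ∧ T.avoids t73} = {L} := by
    ext T
    simp only [leaves_eq_one_iff, Set.mem_ofPred_eq, Set.mem_singleton_iff, and_iff_left_iff_imp]
    rintro rfl
    exact avoids_leaf_node _ _ _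
  rw [av, this, Set.ncard_singleton]

/-- Recurrence for the avoidance sequence of `t73`. -/
theorem av_t73_recurrence :
    av t73 0 = 0 ∧ av t73 1 = 1 ∧ av t73 2 = 0 ∧
    ∀ n : ℕ, 3 ≤ n →
      av t73 n =
        (∑ k ∈ Finset.Icc 1 (n - 2), av t73 k * av t73 (n - k - 1)) +
          ∑ l ∈ Finset.Icc 1 (n - 4), ∑ m ∈ Finset.Icc 1 (n - l - 3),
            ∑ k ∈ Finset.Icc 1 (n - l - m - 2),
              av t73 l * av t73 m * av t73 k * av t73 (n - l - m - k - 1) := by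
  refine ⟨by simpa using av_t73_of_ne_one zero_ne_one, av_t73_one,
    by simpa using av_t73_of_ne_one (by decide : 2 ≠ 1), fun n hn => av_t73_of_ne_one (by omega)⟩
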